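/- Fix a connected graph G with n ≥ 2 vertices and m ≥ 1 edges, a cycle basis ρ_1, …, ρ_c (c = m − n + 1), and an integer B ≥ 2. For p chosen uniformly at random from the configurations {1, …, B}^n, the probability that there exist a noise vector ε ∈ {−1,0,1}^m and a vector x̂ ∈ Lat(ℓ(p) + ε) with ‖x̂‖₂ ≤ (2m)^{1/2}·2^{m/2} such that x̂ is not in the real linear span of the vectors ŵ_{ρ_1}, …, ŵ_{ρ_c} (formed with respect to σ_p and ε), is at most (3·(2m)^{1/2}·2^{m/2})^{m+1} · 3^m · 2^n · n! / B. -/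

import Mathlib

open scoped BigOperators

/-- A graph on `Fin n` with `m` edges is given by the endpoint map `ends`.
An *orientation* `σ` assigns to each edge either its reference pair or the swapped pair. -/
def IsOrientation {n m : ℕ} (ends σ : Fin m → Fin n × Fin n) : Prop :=
  ∀ e, σ e = ends e ∨ σ e = ((ends e).2, (ends e).1)

/-- The graph is simple: no loops and no parallel edges. -/
def IsSimple {n m : ℕ} (ends : Fin m → Fin n × Fin n) : Prop :=
  (∀ e, (ends e).1 ≠ (ends e).2) ∧
    ∀ e e', (ends e = ends e' ∨ ends e = ((ends e').2, (ends e').1)) → e = e'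

/-- The graph is connected. -/
def IsConn {n m : ℕ} (ends : Fin m → Fin n × Fin n) : Prop :=
  ∀ a b : Fin n,
    Relation.ReflTransGen (fun u v => ∃ e, ends e = (u, v) ∨ ends e = (v, u)) a b

/-- The configuration orientation `σ_p`: edge `{i,j}` is oriented `(i,j)` if `p i < p j`,
and `(j,i)` otherwise. -/
def configOrient {n m : ℕ} (ends : Fin m → Fin n × Fin n) {α : Type*} [LinearOrder α]
    (p : Fin n → α) : Fin m → Fin n × Fin n :=
  fun e => if p (ends e).1 < p (ends e).2 then ends e else ((ends e).2, (ends e).1)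

/-- The oriented measurement map `ℓ_σ`: the entry for an edge oriented `(i,j)` is `p j - p i`. -/
def omeas {n m : ℕ} (σ : Fin m → Fin n × Fin n) {R : Type*} [Ring R] (p : Fin n → R) :
    Fin m → R :=
  fun e => p (σ e).2 - p (σ e).1

/-- The measurement map `ℓ`: the entry for edge `{i,j}` is `|p j - p i|`. -/
def meas {n m : ℕ} (ends : Fin m → Fin n × Fin n) {R : Type*} [Ring R] [LinearOrder R]
    [IsStrictOrderedRing R]
    (p : Fin n → R) : Fin m → R :=
  fun e => |p (ends e).2 - p (ends e).1|

/-- The signed edge incidence matrix `M^σ(G)`: the row of an edge oriented `(i,j)` has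
entry `-1` in column `i`, `+1` in column `j`, and `0` elsewhere. -/
def inc {n m : ℕ} (σ : Fin m → Fin n × Fin n) : Matrix (Fin m) (Fin n) ℝ :=
  Matrix.of fun e u => if u = (σ e).2 then 1 else if u = (σ e).1 then -1 else 0

/-- A simple cycle in the graph `ends`: a cyclic sequence of `k ≥ 3` distinct vertices,
consecutive ones joined by distinct edges of the graph. -/
structure SimpleCycle {n m : ℕ} (ends : Fin m → Fin n × Fin n) where
  k : ℕ
  hk : 3 ≤ k
  v : ZMod k → Fin n
  hv : Function.Injective v
  edge : ZMod k → Fin m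
  hedge : Function.Injective edge
  hends : ∀ i : ZMod k,
    ends (edge i) = (v i, v (i + 1)) ∨ ends (edge i) = (v (i + 1), v i)

open Classical in
/-- The signed cycle vector `w_{ρ,σ}` of a simple cycle `ρ` with respect to an
orientation `σ`: `0` off the cycle, `+1` on edges whose `σ`-orientation agrees with
the traversal, `-1` on those that disagree. -/
noncomputable def cycVec {n m : ℕ} {ends : Fin m → Fin n × Fin n} (ρ : SimpleCycle ends)
    (σ : Fin m → Fin n × Fin n) : Fin m → ℤ := fun e =>
  if h : ∃ i, ρ.edge i = e then
    (if σ e = (ρ.v h.choose, ρ.v (h.choose + 1)) then 1 else -1)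
  else 0

/-- The `e`-th column of the `(m+1) × m` matrix `[I_m ; rᵀ]`. -/
def latCol {m : ℕ} (r : Fin m → ℤ) (e : Fin m) : Fin (m + 1) → ℤ :=
  Fin.snoc (fun e' => if e' = e then 1 else 0) (r e)

/-- The lattice `LatZ(r) ⊆ ℤ^{m+1}`: integer span of the columns of `[I_m ; rᵀ]`. -/
def LatZ {m : ℕ} (r : Fin m → ℤ) : Submodule ℤ (Fin (m + 1) → ℤ) :=
  Submodule.span ℤ (Set.range (latCol r))

/-- The Euclidean norm of an integer vector. -/
noncomputable def norm2 {d : ℕ} (y : Fin d → ℤ) : ℝ :=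
  Real.sqrt (∑ j, ((y j : ℝ)) ^ 2)

/-- The hatted cycle vector `ŵ_{ρ,σ} = [w_{ρ,σ} ; εᵀ w_{ρ,σ}]`. -/
noncomputable def hatCycVec {n m : ℕ} {ends : Fin m → Fin n × Fin n} (ρ : SimpleCycle ends)
    (σ : Fin m → Fin n × Fin n) (ε : Fin m → ℤ) : Fin (m + 1) → ℤ :=
  Fin.snoc (cycVec ρ σ) (∑ e, ε e * cycVec ρ σ e)

/-- A vector with all entries in `{-1, 0, 1}`. -/
def SmallVec {m : ℕ} (ε : Fin m → ℤ) : Prop := ∀ e, ε e = -1 ∨ ε e = 0 ∨ ε e = 1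

/-- Cast an integer vector to a real vector. -/
def castR {d : ℕ} (y : Fin d → ℤ) : Fin d → ℝ := fun j => (y j : ℝ)

/-- `r` is *bad* with `(σ, x̂)` (relative to the cycle basis `ρs` and noise `ε`):
`x̂` is linearly independent of the hatted cycle vectors, and `x̂` together with all the
hatted cycle vectors lie in `LatZ r`. -/
noncomputable def BadWith {n m c : ℕ} {ends : Fin m → Fin n × Fin n}
    (ρs : Fin c → SimpleCycle ends) (σ : Fin m → Fin n × Fin n) (ε : Fin m → ℤ)
    (xhat : Fin (m + 1) → ℤ) (r : Fin m → ℤ) : Prop :=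
  castR xhat ∉ Submodule.span ℝ (Set.range fun i => castR (hatCycVec (ρs i) σ ε)) ∧
    xhat ∈ LatZ r ∧ ∀ i, hatCycVec (ρs i) σ ε ∈ LatZ r

/-- `p` is *sad* with `(σ, x̂)`: `r := ℓ_σ(p) + ε` has all coordinates in `{-1, 0, …, B}`
and `r` is bad with `(σ, x̂)`. -/
noncomputable def SadWith {n m c : ℕ} {ends : Fin m → Fin n × Fin n}
    (ρs : Fin c → SimpleCycle ends) (σ : Fin m → Fin n × Fin n) (ε : Fin m → ℤ)
    (xhat : Fin (m + 1) → ℤ) (B : ℕ) (p : Fin n → ℤ) : Prop :=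
  (∀ e, -1 ≤ omeas σ p e + ε e ∧ omeas σ p e + ε e ≤ (B : ℤ)) ∧
    BadWith ρs σ ε xhat (fun e => omeas σ p e + ε e)

/-!
Fix `x̂` and `ε`, and write `x` for the first `m` coordinates of `x̂` and `M_σ` for the signed
incidence matrix of an orientation `σ`. Since `ℓ(p) = M_{σ_p} p`, membership
`x̂ ∈ LatZ(ℓ(p) + ε)` says that `p` solves the linear equation
`(M_σᵀ x) ⬝ p = x̂_{m+1} - εᵀ x` with `σ = σ_p`. Its coefficient vector is nonzero: otherwise
`x` lies in the left kernel of `M_σ`, which for a connected graph has dimension `m - n + 1` and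
is therefore spanned by the cycle vectors, and then `x̂` lies in the span of the `ŵ_ρ`. So for
each `(x̂, ε, σ)` at most `B^(n-1)` configurations of the box are bad. The orientation `σ_p` is
determined by a sorting permutation of `p` together with the positions where the sorted values
jump, hence takes at most `n! 2^n` values, and the norm bound `‖x̂‖ ≤ N` leaves at most
`(3N)^(m+1)` choices of `x̂` against `3^m` choices of `ε`.
-/

section OrderPattern

variable {n : ℕ} {α : Type*} [LinearOrder α]

def blockStarts (p : Fin n → α) (k : Fin n) : Bool :=
  decide (∀ j < k, p (Tuple.sort p j) < p (Tuple.sort p k))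

theorem lt_iff_exists_blockStarts (p : Fin n → α) (i j : Fin n) :
    p i < p j ↔
      ∃ k, blockStarts p k ∧ (Tuple.sort p)⁻¹ i < k ∧ k ≤ (Tuple.sort p)⁻¹ j := by
  set w := Tuple.sort p
  have hmono : Monotone (p ∘ w) := Tuple.monotone_sort p
  have hi : p (w (w⁻¹ i)) = p i := by simp
  have hj : p (w (w⁻¹ j)) = p j := by simp
  constructor
  · intro hlt
    set S := Finset.univ.filter fun k => p i < p (w k)
    have hjS : w⁻¹ j ∈ S := by simp [S, hlt]
    have hkS : p i < p (w (S.min' ⟨_, hjS⟩)) := by simpa [S] using S.min'_mem ⟨_, hjS⟩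
    refine ⟨S.min' ⟨_, hjS⟩, ?_, ?_, S.min'_le _ hjS⟩
    · simp only [blockStarts, decide_eq_true_eq]
      intro l hl
      have hlS : l ∉ S := fun hlS => (S.min'_le l hlS).not_gt hl
      simp only [S, Finset.mem_filter, Finset.mem_univ, true_and, not_lt] at hlS
      exact hlS.trans_lt hkS
    · by_contra! hle
      have := hmono hle
      simp only [Function.comp_apply, hi] at this
      exact this.not_gt hkS
  · rintro ⟨k, hk, hik, hkj⟩
    simp only [blockStarts, decide_eq_true_eq] at hk
    calc p i = p (w (w⁻¹ i)) := hi.symm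
      _ < p (w k) := hk _ hik
      _ ≤ p (w (w⁻¹ j)) := hmono hkj
      _ = p j := hj

def patternOrient {m : ℕ} (ends : Fin m → Fin n × Fin n)
    (τ : Equiv.Perm (Fin n) × (Fin n → Bool)) : Fin m → Fin n × Fin n :=
  fun e => if ∃ k, τ.2 k ∧ τ.1⁻¹ (ends e).1 < k ∧ k ≤ τ.1⁻¹ (ends e).2 then ends e
    else ((ends e).2, (ends e).1)

theorem configOrient_eq_patternOrient {m : ℕ} (ends : Fin m → Fin n × Fin n) (p : Fin n → α) :
    configOrient ends p = patternOrient ends (Tuple.sort p, blockStarts p) := by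
  funext e
  simp only [configOrient, patternOrient, lt_iff_exists_blockStarts]

theorem card_image_configOrient_le {m : ℕ} (ends : Fin m → Fin n × Fin n)
    (s : Finset (Fin n → α)) : (s.image (configOrient ends)).card ≤ n.factorial * 2 ^ n := by
  classical
  calc (s.image (configOrient ends)).card
      ≤ (Finset.univ.image (patternOrient ends)).card := by
        refine Finset.card_le_card fun σ hσ => ?_
        obtain ⟨p, -, rfl⟩ := Finset.mem_image.mp hσ
        rw [configOrient_eq_patternOrient]
        exact Finset.mem_image_of_mem _ (Finset.mem_univ _)
    _ ≤ Finset.univ.card := Finset.card_image_le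
    _ = n.factorial * 2 ^ n := by simp [Fintype.card_perm]

end OrderPattern

section Incidence

open Matrix

variable {n m : ℕ} {ends σ : Fin m → Fin n × Fin n}

theorem IsOrientation.fst_ne_snd (hσ : IsOrientation ends σ)
    (hloop : ∀ e, (ends e).1 ≠ (ends e).2) (e : Fin m) : (σ e).1 ≠ (σ e).2 := by
  rcases hσ e with h | h <;> rw [h]
  exacts [hloop e, (hloop e).symm]

theorem configOrient_isOrientation (ends : Fin m → Fin n × Fin n) {α : Type*} [LinearOrder α]
    (p : Fin n → α) : IsOrientation ends (configOrient ends p) := fun e => by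
  unfold configOrient
  split_ifs <;> simp

theorem inc_apply_of_ne {e : Fin m} (he : (σ e).1 ≠ (σ e).2) (u : Fin n) :
    inc σ e u = (Pi.single (σ e).2 1 - Pi.single (σ e).1 1 : Fin n → ℝ) u := by
  simp only [inc, Matrix.of_apply, Pi.sub_apply, Pi.single_apply]
  split_ifs <;> simp_all

theorem inc_mulVec_apply {e : Fin m} (he : (σ e).1 ≠ (σ e).2) (q : Fin n → ℝ) :
    (inc σ *ᵥ q) e = q (σ e).2 - q (σ e).1 := by
  simp [mulVec, dotProduct, inc_apply_of_ne he, sub_mul, Pi.single_apply]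

theorem inc_configOrient_mulVec (hloop : ∀ e, (ends e).1 ≠ (ends e).2) (p : Fin n → ℤ) :
    inc (configOrient ends p) *ᵥ castR p = castR (meas ends p) := by
  funext e
  rw [inc_mulVec_apply ((configOrient_isOrientation ends p).fst_ne_snd hloop e)]
  simp only [castR, meas, configOrient]
  split_ifs with h
  · rw [abs_of_pos (sub_pos.mpr h)]; push_cast; ring
  · rw [abs_of_nonpos (sub_nonpos.mpr (not_lt.mp h))]; push_cast; ring

theorem ker_inc_le_span_one (hloop : ∀ e, (ends e).1 ≠ (ends e).2) (hconn : IsConn ends)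
    (hσ : IsOrientation ends σ) :
    LinearMap.ker (inc σ).mulVecLin ≤ Submodule.span ℝ {fun _ => 1} := by
  intro q hq
  have hadj : ∀ a b, (∃ e, ends e = (a, b) ∨ ends e = (b, a)) → q a = q b := by
    rintro a b ⟨e, he⟩
    have h0 : q (σ e).2 - q (σ e).1 = 0 := by
      rw [← inc_mulVec_apply (hσ.fst_ne_snd hloop e)]
      exact congrFun hq e
    rcases hσ e with h | h <;> rcases he with he | he <;> simp only [h, he] at h0 <;> linarith
  have hconst : ∀ a b, q a = q b := fun a b => by
    induction hconn a b with
    | refl => rfl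
    | tail _ hbc ih => exact ih.trans (hadj _ _ hbc)
  rcases isEmpty_or_nonempty (Fin n) with hn | ⟨⟨u₀⟩⟩
  · simp [Subsingleton.elim q 0]
  · exact Submodule.mem_span_singleton.mpr ⟨q u₀, funext fun u => by simp [hconst u u₀]⟩

theorem finrank_ker_inc_transpose_le (hloop : ∀ e, (ends e).1 ≠ (ends e).2)
    (hconn : IsConn ends) (hσ : IsOrientation ends σ) :
    Module.finrank ℝ (LinearMap.ker (inc σ)ᵀ.mulVecLin) ≤ m - (n - 1) := by
  have hker : Module.finrank ℝ (LinearMap.ker (inc σ).mulVecLin) ≤ 1 :=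
    (Submodule.finrank_mono (ker_inc_le_span_one hloop hconn hσ)).trans
      (finrank_span_le_card _) |>.trans (by simp)
  have hM := (inc σ).mulVecLin.finrank_range_add_finrank_ker
  have hMt := (inc σ)ᵀ.mulVecLin.finrank_range_add_finrank_ker
  have hrank : Module.finrank ℝ (LinearMap.range (inc σ)ᵀ.mulVecLin) =
      Module.finrank ℝ (LinearMap.range (inc σ).mulVecLin) := by
    rw [← Matrix.rank, ← Matrix.rank, Matrix.rank_transpose]
  simp only [Module.finrank_fin_fun] at hM hMt
  omega

end Incidence

namespace SimpleCycle

open Matrix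

variable {n m : ℕ} {ends σ : Fin m → Fin n × Fin n} (ρ : SimpleCycle ends)

theorem v_ne_v_add_one (i : ZMod ρ.k) : ρ.v i ≠ ρ.v (i + 1) := by
  have : Fact (1 < ρ.k) := ⟨by linarith [ρ.hk]⟩
  intro h
  simpa using ρ.hv h

theorem cycVec_edge (σ : Fin m → Fin n × Fin n) (i : ZMod ρ.k) :
    cycVec ρ σ (ρ.edge i) = if σ (ρ.edge i) = (ρ.v i, ρ.v (i + 1)) then 1 else -1 := by
  have h : ∃ i', ρ.edge i' = ρ.edge i := ⟨i, rfl⟩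
  rw [cycVec, dif_pos h, ρ.hedge h.choose_spec]

theorem cycVec_of_notMem_range (σ : Fin m → Fin n × Fin n) {e : Fin m}
    (he : e ∉ Set.range ρ.edge) : cycVec ρ σ e = 0 :=
  dif_neg he

theorem orient_edge (hσ : IsOrientation ends σ) (i : ZMod ρ.k) :
    σ (ρ.edge i) = (ρ.v i, ρ.v (i + 1)) ∨ σ (ρ.edge i) = (ρ.v (i + 1), ρ.v i) := by
  rcases hσ (ρ.edge i) with h | h <;> rcases ρ.hends i with h' | h' <;> simp [h, h']

theorem cycVec_eq_sign_mul (hσ : IsOrientation ends σ) (e : Fin m) :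
    cycVec ρ σ e = (if σ e = ends e then 1 else -1) * cycVec ρ ends e := by
  by_cases he : e ∈ Set.range ρ.edge
  · obtain ⟨i, rfl⟩ := he
    have hne := ρ.v_ne_v_add_one i
    rw [cycVec_edge, cycVec_edge]
    rcases hσ (ρ.edge i) with h | h <;> rcases ρ.hends i with h' | h' <;>
      simp [h, h', hne, hne.symm]
  · simp [cycVec_of_notMem_range ρ _ he]

theorem inc_transpose_mulVec_cycVec (hσ : IsOrientation ends σ) :
    (inc σ)ᵀ *ᵥ castR (cycVec ρ σ) = 0 := by
  have : NeZero ρ.k := ⟨by linarith [ρ.hk]⟩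
  funext u
  have hne := ρ.v_ne_v_add_one
  -- around the cycle, each vertex is entered once and left once
  have hstep : ∀ i, inc σ (ρ.edge i) u * cycVec ρ σ (ρ.edge i) =
      (Pi.single (ρ.v (i + 1)) 1 - Pi.single (ρ.v i) 1 : Fin n → ℝ) u := by
    intro i
    rcases ρ.orient_edge hσ i with h | h
    · rw [inc_apply_of_ne (by rw [h]; exact hne i), cycVec_edge, if_pos h, h]
      simp
    · rw [inc_apply_of_ne (by rw [h]; exact (hne i).symm), cycVec_edge,
        if_neg (by simp [h, hne i]), h]
      simp
  simp only [mulVec, dotProduct, transpose_apply, castR, Pi.zero_apply]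
  rw [← Fintype.sum_of_injective ρ.edge ρ.hedge _ _
    (fun e he => by rw [cycVec_of_notMem_range ρ σ he, Int.cast_zero, mul_zero]) (fun i => rfl)]
  simp only [hstep, Pi.sub_apply, Finset.sum_sub_distrib]
  rw [Fintype.sum_equiv (Equiv.addRight 1) (fun i => (Pi.single (ρ.v (i + 1)) 1 : Fin n → ℝ) u)
    (fun i => (Pi.single (ρ.v i) 1 : Fin n → ℝ) u) (fun i => rfl), sub_self]

end SimpleCycle

section CycleSpace

open Matrix

variable {n m : ℕ} {ends σ : Fin m → Fin n × Fin n}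

theorem linearIndependent_cycVec {ι : Type*} {ρs : ι → SimpleCycle ends}
    (hbasis : LinearIndependent ℝ fun i => castR (cycVec (ρs i) ends))
    (hσ : IsOrientation ends σ) : LinearIndependent ℝ fun i => castR (cycVec (ρs i) σ) := by
  have hsign : ∀ e, (if σ e = ends e then 1 else -1 : ℝ) ≠ 0 := fun e => by split_ifs <;> norm_num
  let D := LinearEquiv.piCongrRight fun e => LinearEquiv.smulOfNeZero ℝ ℝ _ (hsign e)
  have hD : (D ∘ fun i => castR (cycVec (ρs i) ends)) = fun i => castR (cycVec (ρs i) σ) := by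
    funext i e
    simp [D, castR, (ρs i).cycVec_eq_sign_mul hσ e]
  rw [← hD]
  exact hbasis.map' D.toLinearMap D.ker

theorem ker_inc_transpose_le_span_cycVec (hloop : ∀ e, (ends e).1 ≠ (ends e).2)
    (hconn : IsConn ends) (ρs : Fin (m - n + 1) → SimpleCycle ends)
    (hbasis : LinearIndependent ℝ fun i => castR (cycVec (ρs i) ends))
    (hσ : IsOrientation ends σ) :
    LinearMap.ker (inc σ)ᵀ.mulVecLin ≤
      Submodule.span ℝ (Set.range fun i => castR (cycVec (ρs i) σ)) := by
  have hle : Submodule.span ℝ (Set.range fun i => castR (cycVec (ρs i) σ)) ≤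
      LinearMap.ker (inc σ)ᵀ.mulVecLin :=
    Submodule.span_le.mpr <| Set.range_subset_iff.mpr fun i =>
      (ρs i).inc_transpose_mulVec_cycVec hσ
  refine (Submodule.eq_of_le_of_finrank_le hle ?_).ge
  rw [finrank_span_eq_card (linearIndependent_cycVec hbasis hσ), Fintype.card_fin]
  have := finrank_ker_inc_transpose_le hloop hconn hσ
  omega

end CycleSpace

theorem LatZ.last_eq {m : ℕ} {r : Fin m → ℤ} {y : Fin (m + 1) → ℤ} (hy : y ∈ LatZ r) :
    y (Fin.last m) = ∑ e, r e * y e.castSucc := by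
  let L : (Fin (m + 1) → ℤ) →ₗ[ℤ] ℤ :=
    LinearMap.proj (Fin.last m) - ∑ e, r e • LinearMap.proj e.castSucc
  have hL : LatZ r ≤ LinearMap.ker L := by
    refine Submodule.span_le.mpr (Set.range_subset_iff.mpr fun e => ?_)
    simp [L, latCol, Finset.sum_apply]
  have := hL hy
  simp [L, Finset.sum_apply] at this
  linarith

def snocDot {m : ℕ} (ε : Fin m → ℝ) : (Fin m → ℝ) →ₗ[ℝ] (Fin (m + 1) → ℝ) where
  toFun z := Fin.snoc z (∑ e, ε e * z e)
  map_add' y z := by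
    ext j
    refine Fin.lastCases ?_ (fun e => ?_) j <;> simp [mul_add, Finset.sum_add_distrib]
  map_smul' a z := by
    ext j
    refine Fin.lastCases ?_ (fun e => ?_) j <;> simp [Finset.mul_sum, mul_left_comm]

theorem mem_span_snocDot {m : ℕ} {ι : Type*} (W : ι → Fin m → ℝ) (ε : Fin m → ℝ)
    {y : Fin (m + 1) → ℝ} (hy : (fun e => y e.castSucc) ∈ Submodule.span ℝ (Set.range W))
    (hlast : y (Fin.last m) = ∑ e, ε e * y e.castSucc) :
    y ∈ Submodule.span ℝ (Set.range fun i => snocDot ε (W i)) := by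
  have hyL : y = snocDot ε fun e => y e.castSucc := by
    ext j
    refine Fin.lastCases ?_ (fun e => ?_) j <;> simp [snocDot, hlast]
  rw [hyL, Set.range_comp', Submodule.span_image]
  exact Submodule.mem_map_of_mem hy

theorem castR_hatCycVec {n m : ℕ} {ends : Fin m → Fin n × Fin n} (ρ : SimpleCycle ends)
    (σ : Fin m → Fin n × Fin n) (ε : Fin m → ℤ) :
    castR (hatCycVec ρ σ ε) = snocDot (castR ε) (castR (cycVec ρ σ)) := by
  ext j
  refine Fin.lastCases ?_ (fun e => ?_) j <;> simp [hatCycVec, snocDot, castR]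

section Counting

open Matrix

variable {n m : ℕ} {ends : Fin m → Fin n × Fin n}

def IsBadFor {ι : Type*} (ρs : ι → SimpleCycle ends) (ε : Fin m → ℤ) (xhat : Fin (m + 1) → ℤ)
    (p : Fin n → ℤ) : Prop :=
  xhat ∈ LatZ (fun e => meas ends p e + ε e) ∧
    castR xhat ∉ Submodule.span ℝ
      (Set.range fun i => castR (hatCycVec (ρs i) (configOrient ends p) ε))

theorem inc_transpose_mulVec_dotProduct_eq (hloop : ∀ e, (ends e).1 ≠ (ends e).2)
    {p : Fin n → ℤ} {ε : Fin m → ℤ} {xhat : Fin (m + 1) → ℤ}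
    (hx : xhat ∈ LatZ (fun e => meas ends p e + ε e)) :
    ((inc (configOrient ends p))ᵀ *ᵥ fun e => (xhat e.castSucc : ℝ)) ⬝ᵥ castR p =
      ((xhat (Fin.last m) - ∑ e, ε e * xhat e.castSucc : ℤ) : ℝ) := by
  rw [mulVec_transpose, ← dotProduct_mulVec, inc_configOrient_mulVec hloop, LatZ.last_eq hx]
  simp [dotProduct, castR, add_mul, Finset.sum_add_distrib, mul_comm]

theorem inc_transpose_mulVec_ne_zero (hloop : ∀ e, (ends e).1 ≠ (ends e).2)
    (hconn : IsConn ends) (ρs : Fin (m - n + 1) → SimpleCycle ends)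
    (hbasis : LinearIndependent ℝ fun i => castR (cycVec (ρs i) ends))
    {p : Fin n → ℤ} {ε : Fin m → ℤ} {xhat : Fin (m + 1) → ℤ} (hp : IsBadFor ρs ε xhat p) :
    (inc (configOrient ends p))ᵀ *ᵥ (fun e => (xhat e.castSucc : ℝ)) ≠ 0 := by
  intro h0
  apply hp.2
  have hker := ker_inc_transpose_le_span_cycVec hloop hconn ρs hbasis
    (configOrient_isOrientation ends p) h0
  have hlast : (xhat (Fin.last m) : ℝ) = ∑ e, castR ε e * xhat e.castSucc := by
    have := inc_transpose_mulVec_dotProduct_eq hloop hp.1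
    rw [h0, zero_dotProduct] at this
    push_cast at this
    simp only [castR]
    linarith
  simpa only [castR_hatCycVec] using mem_span_snocDot _ (castR ε) hker hlast

theorem card_filter_dotProduct_eq_le (S : Finset ℤ) {a : Fin n → ℝ} {j : Fin n} (hj : a j ≠ 0)
    (t : ℝ) :
    ((Fintype.piFinset fun _ => S).filter fun p => a ⬝ᵥ castR p = t).card ≤ S.card ^ (n - 1) := by
  classical
  calc _ ≤ (Fintype.piFinset fun _ : {i // i ≠ j} => S).card := by
        refine Finset.card_le_card_of_injOn (fun p i => p i) (fun p hp => ?_)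
          (fun p hp q hq hpq => ?_)
        · simp only [Finset.mem_coe, Finset.mem_filter, Fintype.mem_piFinset] at hp
          simp [hp.1]
        · simp only [Finset.mem_coe, Finset.mem_filter, Fintype.mem_piFinset] at hp hq
          have hoff : ∀ i ≠ j, p i = q i := fun i hi => congrFun hpq ⟨i, hi⟩
          have hsum : a ⬝ᵥ (castR p - castR q) = 0 := by rw [dotProduct_sub, hp.2, hq.2, sub_self]
          rw [dotProduct, Finset.sum_eq_single j (fun i _ hi => by simp [castR, hoff i hi])
            (by simp)] at hsum
          have hj' : p j = q j := by simpa [castR, hj, sub_eq_zero] using hsum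
          funext i
          by_cases hi : i = j
          · rw [hi, hj']
          · exact hoff i hi
    _ = S.card ^ (n - 1) := by simp [Fintype.card_subtype_compl]

open Classical in
theorem card_filter_isBadFor_le (hloop : ∀ e, (ends e).1 ≠ (ends e).2)
    (hconn : IsConn ends) (ρs : Fin (m - n + 1) → SimpleCycle ends)
    (hbasis : LinearIndependent ℝ fun i => castR (cycVec (ρs i) ends))
    (S : Finset ℤ) (ε : Fin m → ℤ) (xhat : Fin (m + 1) → ℤ) :
    ((Fintype.piFinset fun _ => S).filter (IsBadFor ρs ε xhat)).card ≤
      S.card ^ (n - 1) * (n.factorial * 2 ^ n) := by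
  set bad := (Fintype.piFinset fun _ => S).filter (IsBadFor ρs ε xhat)
  refine (bad.card_le_mul_card_image _ fun σ hσ => ?_).trans
    (Nat.mul_le_mul_left _ (card_image_configOrient_le ends bad))
  -- all `p` with orientation `σ` satisfy one nontrivial linear equation
  obtain ⟨p₀, hp₀, rfl⟩ := Finset.mem_image.mp hσ
  obtain ⟨j, hj⟩ := Function.ne_iff.mp <|
    inc_transpose_mulVec_ne_zero hloop hconn ρs hbasis (Finset.mem_filter.mp hp₀).2
  refine le_trans (Finset.card_le_card fun p hp => ?_) (card_filter_dotProduct_eq_le S hj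
    ((xhat (Fin.last m) - ∑ e, ε e * xhat e.castSucc : ℤ) : ℝ))
  simp only [bad, Finset.mem_filter] at hp ⊢
  obtain ⟨⟨hpS, hbad⟩, hpσ⟩ := hp
  exact ⟨hpS, hpσ ▸ inc_transpose_mulVec_dotProduct_eq hloop hbad.1⟩

end Counting

theorem mem_Icc_floor_of_norm2_le {d : ℕ} {y : Fin d → ℤ} {N : ℝ} (h : norm2 y ≤ N)
    (j : Fin d) : y j ∈ Finset.Icc (-⌊N⌋) ⌊N⌋ := by
  have hj : |(y j : ℝ)| ≤ N := by
    refine le_trans ?_ h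
    rw [norm2, ← Real.sqrt_sq_eq_abs]
    exact Real.sqrt_le_sqrt
      (Finset.single_le_sum (fun i _ => sq_nonneg (y i : ℝ)) (Finset.mem_univ j))
  have : |y j| ≤ ⌊N⌋ := Int.le_floor.mpr (by exact_mod_cast hj)
  exact Finset.mem_Icc.mpr (abs_le.mp this)

theorem card_Icc_neg_floor_le {N : ℝ} (hN : 1 ≤ N) :
    ((Finset.Icc (-⌊N⌋) ⌊N⌋).card : ℝ) ≤ 3 * N := by
  have h0 : 0 ≤ ⌊N⌋ := Int.floor_nonneg.mpr (by linarith)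
  rw [Int.card_Icc, ← Int.cast_natCast, Int.toNat_of_nonneg (by omega)]
  push_cast
  linarith [Int.floor_le N]

theorem natCard_badConfigs_le {n m : ℕ} {ends : Fin m → Fin n × Fin n}
    (hloop : ∀ e, (ends e).1 ≠ (ends e).2) (hconn : IsConn ends)
    (ρs : Fin (m - n + 1) → SimpleCycle ends)
    (hbasis : LinearIndependent ℝ fun i => castR (cycVec (ρs i) ends)) (B : ℕ) (N : ℝ) :
    Nat.card {p : Fin n → ℤ //
        (∀ i, 1 ≤ p i ∧ p i ≤ (B : ℤ)) ∧
        ∃ ε : Fin m → ℤ, SmallVec ε ∧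
          ∃ xhat : Fin (m + 1) → ℤ,
            xhat ∈ LatZ (fun e => meas ends p e + ε e) ∧
            norm2 xhat ≤ N ∧
            castR xhat ∉ Submodule.span ℝ
              (Set.range fun i => castR (hatCycVec (ρs i) (configOrient ends p) ε))} ≤
      (Finset.Icc (-⌊N⌋) ⌊N⌋).card ^ (m + 1) * 3 ^ m * (B ^ (n - 1) * (n.factorial * 2 ^ n)) := by
  classical
  set box := Fintype.piFinset fun _ : Fin n => Finset.Icc (1 : ℤ) B
  set certs := (Fintype.piFinset fun _ : Fin (m + 1) => Finset.Icc (-⌊N⌋) ⌊N⌋) ×ˢ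
    Fintype.piFinset fun _ : Fin m => ({-1, 0, 1} : Finset ℤ)
  calc _ ≤ (certs.biUnion fun c => box.filter (IsBadFor ρs c.2 c.1)).card := by
        rw [← Nat.card_eq_finsetCard]
        refine Nat.card_mono (Finset.finite_toSet _) ?_
        rintro p ⟨hbox, ε, hε, xhat, hlat, hnorm, hspan⟩
        simp only [certs, box, Finset.coe_biUnion, Finset.coe_filter, Set.mem_iUnion]
        refine ⟨(xhat, ε), ?_, ?_, hlat, hspan⟩
        · simp only [Finset.coe_product, Set.mem_prod, Finset.mem_coe, Fintype.mem_piFinset]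
          refine ⟨mem_Icc_floor_of_norm2_le hnorm, fun e => ?_⟩
          rcases hε e with h | h | h <;> simp [h]
        · simpa using hbox
    _ ≤ certs.card * (B ^ (n - 1) * (n.factorial * 2 ^ n)) :=
        Finset.card_biUnion_le_card_mul _ _ _ fun c _ => by
          simpa using card_filter_isBadFor_le hloop hconn ρs hbasis (Finset.Icc 1 B) c.2 c.1
    _ = _ := by simp [certs, Finset.card_product]

/-- for `p` uniform in `{1,…,B}^n`, the probability that there exist a
noise vector `ε ∈ {-1,0,1}^m` and a vector `x̂ ∈ LatZ(ℓ(p) + ε)` with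
`‖x̂‖₂ ≤ (2m)^{1/2}·2^{m/2}` not in the real span of the hatted cycle vectors (formed
w.r.t. `σ_p` and `ε`) is at most `(3·(2m)^{1/2}·2^{m/2})^{m+1} · 3^m · 2^n · n! / B`. -/
theorem stmt17 (n m : ℕ) (hn : 2 ≤ n) (hm : 1 ≤ m) (ends : Fin m → Fin n × Fin n)
    (hG : IsSimple ends) (hconn : IsConn ends)
    (ρs : Fin (m - n + 1) → SimpleCycle ends)
    (hbasis : LinearIndependent ℝ fun i => castR (cycVec (ρs i) ends))
    (B : ℕ) (hB : 2 ≤ B) :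
    (Nat.card {p : Fin n → ℤ //
        (∀ i, 1 ≤ p i ∧ p i ≤ (B : ℤ)) ∧
        ∃ ε : Fin m → ℤ, SmallVec ε ∧
          ∃ xhat : Fin (m + 1) → ℤ,
            xhat ∈ LatZ (fun e => meas ends p e + ε e) ∧
            norm2 xhat ≤ Real.sqrt (2 * m) * 2 ^ ((m : ℝ) / 2) ∧
            castR xhat ∉ Submodule.span ℝ
              (Set.range fun i => castR (hatCycVec (ρs i) (configOrient ends p) ε))} : ℝ) /
        (B : ℝ) ^ n ≤
      (3 * (Real.sqrt (2 * m) * 2 ^ ((m : ℝ) / 2))) ^ (m + 1) * 3 ^ m * 2 ^ n *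
        Nat.factorial n / B := by
  set N : ℝ := √(2 * m) * 2 ^ ((m : ℝ) / 2)
  have hN : 1 ≤ N := one_le_mul_of_one_le_of_one_le
    (Real.one_le_sqrt.mpr (by norm_cast; omega)) (Real.one_le_rpow one_le_two (by positivity))
  have hcard := natCard_badConfigs_le hG.1 hconn ρs hbasis B N
  have hB0 : (0 : ℝ) < B := Nat.cast_pos.mpr (by omega)
  rw [div_le_div_iff₀ (by positivity) hB0, ← pow_sub_one_mul (by omega : n ≠ 0) (B : ℝ)]
  calc _ ≤ ((Finset.Icc (-⌊N⌋) ⌊N⌋).card ^ (m + 1) * 3 ^ m *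
        (B ^ (n - 1) * (n.factorial * 2 ^ n)) : ℕ) * (B : ℝ) :=
        mul_le_mul_of_nonneg_right (by exact_mod_cast hcard) hB0.le
    _ ≤ (3 * N) ^ (m + 1) * 3 ^ m * (B ^ (n - 1) * (n.factorial * 2 ^ n)) * B := by
        push_cast
        gcongr
        exact card_Icc_neg_floor_le hN
    _ = _ := by ring
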